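/- arXiv:2208.04861 — 2 statements merged into one kernel-verified Lean document; each statement's English description precedes it below -/
import Mathlib

section
/- Let X be a C-contracting quasi-geodesic in Y and let ξ ∈ ∂_hY with ξ ∉ [ΛX]. Then every η ∈ [ξ] satisfies η ∉ [ΛX] and d_X(ξ,η) ≤ 6C. -/
open Metric Filter Topology Set MeasureTheory Pointwise

noncomputable section

namespace ConfDyn

/-- `γ` is (the image of) a geodesic segment from `x` to `y`. -/
def IsGeodesicIn (Y : Type*) [MetricSpace Y] (γ : Set Y) (x y : Y) : Prop :=
  ∃ f : ℝ → Y, f 0 = x ∧ f (dist x y) = y ∧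
    (∀ s ∈ Set.Icc (0 : ℝ) (dist x y), ∀ t ∈ Set.Icc (0 : ℝ) (dist x y),
      dist (f s) (f t) = |s - t|) ∧
    γ = f '' Set.Icc (0 : ℝ) (dist x y)

/-- `Y` is a geodesic metric space. -/
def GeodesicSpace (Y : Type*) [MetricSpace Y] : Prop :=
  ∀ x y : Y, ∃ γ : Set Y, IsGeodesicIn Y γ x y

/-- the shortest projection of the point `y` to the subset `X`. -/
def projSet {Y : Type*} [MetricSpace Y] (X : Set Y) (y : Y) : Set Y :=
  {x ∈ X | dist y x = Metric.infDist y X}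

/-- the shortest projection of the subset `A` to the subset `X`. -/
def projSetOf {Y : Type*} [MetricSpace Y] (X A : Set Y) : Set Y :=
  ⋃ a ∈ A, projSet X a

/-- `d_X(x,y)`, the diameter of `π_X(x) ∪ π_X(y)`. -/
def projDist {Y : Type*} [MetricSpace Y] (X : Set Y) (x y : Y) : ENNReal :=
  EMetric.diam (projSet X x ∪ projSet X y)

/-- `X` is a `C`-contracting subset: any geodesic segment at distance at least `C`
from `X` has shortest projection to `X` of diameter at most `C`. -/
def IsContractingSet {Y : Type*} [MetricSpace Y] (C : ℝ) (X : Set Y) : Prop :=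
  ∀ x y : Y, ∀ γ : Set Y, IsGeodesicIn Y γ x y →
    (∀ p ∈ γ, C ≤ Metric.infDist p X) →
    EMetric.diam (projSetOf X γ) ≤ ENNReal.ofReal C

/-- the Busemann function based at `o` associated to `y`, `b_y(x) = d(x,y) - d(o,y)`. -/
def busemannCM {Y : Type*} [MetricSpace Y] (o y : Y) : C(Y, ℝ) :=
  ⟨fun x => dist x y - dist o y,
    (continuous_id.dist continuous_const).sub continuous_const⟩

/-- the horofunction compactification of `Y`: the closure of `{b_y : y ∈ Y}` in
`C(Y,ℝ)` with the compact-open topology. -/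
def horoCpt (Y : Type*) [MetricSpace Y] (o : Y) : Set C(Y, ℝ) :=
  closure (Set.range (busemannCM o))

/-- `ξ` is a point of the horofunction boundary `∂_h Y`. -/
def IsHoroPoint {Y : Type*} [MetricSpace Y] (o : Y) (ξ : C(Y, ℝ)) : Prop :=
  ξ ∈ horoCpt Y o ∧ ∀ y : Y, ξ ≠ busemannCM o y

/-- a sequence of points of `Y` converges to `ξ` in the horofunction compactification. -/
def HoroConv {Y : Type*} [MetricSpace Y] (o : Y) (u : ℕ → Y) (ξ : C(Y, ℝ)) : Prop :=
  Filter.Tendsto (fun n => busemannCM o (u n)) atTop (nhds ξ)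

/-- two horofunctions have (K-)finite difference for some K. -/
def FinDiff {Y : Type*} [MetricSpace Y] (ξ η : C(Y, ℝ)) : Prop :=
  ∃ K : ℝ, ∀ z : Y, |ξ z - η z| ≤ K

/-- the locus of a subset of the horofunction boundary. -/
def locus {Y : Type*} [MetricSpace Y] (o : Y) (Λ : Set C(Y, ℝ)) : Set C(Y, ℝ) :=
  {η | IsHoroPoint o η ∧ ∃ ξ ∈ Λ, FinDiff ξ η}

/-- the finite-difference relation as a setoid on `C(Y,ℝ)`. -/
def finDiffSetoid (Y : Type*) [MetricSpace Y] : Setoid C(Y, ℝ) where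
  r := FinDiff
  iseqv := ⟨fun ξ => ⟨0, fun z => by simp⟩,
    fun h => h.imp (fun K hK z => by rw [abs_sub_comm]; exact hK z),
    fun h₁ h₂ => by
      obtain ⟨K₁, hK₁⟩ := h₁
      obtain ⟨K₂, hK₂⟩ := h₂
      exact ⟨K₁ + K₂, fun z => (abs_sub_le _ _ _).trans (add_le_add (hK₁ z) (hK₂ z))⟩⟩

/-- the limit set of a subset `X ⊆ Y` in the horofunction boundary. -/
def limitSetOf {Y : Type*} [MetricSpace Y] (o : Y) (X : Set Y) : Set C(Y, ℝ) :=
  {ξ | IsHoroPoint o ξ ∧ ∃ u : ℕ → Y, (∀ n, u n ∈ X) ∧ HoroConv o u ξ}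

/-- accumulation points of a sequence of points of `Y` in the horofunction boundary. -/
def accPoints {Y : Type*} [MetricSpace Y] (o : Y) (u : ℕ → Y) : Set C(Y, ℝ) :=
  {ξ | IsHoroPoint o ξ ∧ ∃ φ : ℕ → ℕ, StrictMono φ ∧ HoroConv o (u ∘ φ) ξ}

/-- `X` is a quasi-geodesic: the image of a quasi-isometric embedding of a real interval. -/
def IsQuasiGeodesicSet {Y : Type*} [MetricSpace Y] (X : Set Y) : Prop :=
  ∃ (c : ℝ) (I : Set ℝ) (φ : ℝ → Y), 1 ≤ c ∧ I.OrdConnected ∧ X = φ '' I ∧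
    ∀ s ∈ I, ∀ t ∈ I,
      (1 / c) * |s - t| - c ≤ dist (φ s) (φ t) ∧ dist (φ s) (φ t) ≤ c * |s - t| + c

section GroupAction

variable {Y : Type*} [MetricSpace Y] {G : Type*} [Group G] [MulAction G Y]

/-- `G` acts by isometries on `Y`. -/
def IsometricAction (G Y : Type*) [Group G] [MulAction G Y] [MetricSpace Y] : Prop :=
  ∀ g : G, Isometry (fun y : Y => g • y)

/-- the action of `G` on `Y` is (metrically) proper. -/
def ProperAction (G Y : Type*) [Group G] [MulAction G Y] [MetricSpace Y] : Prop :=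
  ∀ B : Set Y, Bornology.IsBounded B → Set.Finite {g : G | (g • B) ∩ B ≠ ∅}

/-- `G` is non-elementary: no finite-index subgroup is trivial or infinite cyclic. -/
def NonElementary (G : Type*) [Group G] : Prop :=
  ∀ H : Subgroup G, H.index ≠ 0 → ∀ g : G, H ≠ Subgroup.zpowers g

/-- the orbit of `o` under the cyclic group generated by `f`. -/
def cyclicOrbit (o : Y) (f : G) : Set Y :=
  {y : Y | ∃ n : ℤ, y = f ^ n • o}

/-- `f` is a contracting element with `C`-contracting orbit: it has infinite order,
`n ↦ fⁿ • o` is a quasi-isometric embedding of `ℤ`, and `⟨f⟩ • o` is `C`-contracting. -/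
def IsContractingElt (o : Y) (C : ℝ) (f : G) : Prop :=
  (∀ n : ℤ, n ≠ 0 → f ^ n ≠ 1) ∧
  (∃ c : ℝ, 1 ≤ c ∧ ∀ m n : ℤ,
      (1 / c) * |(m : ℝ) - (n : ℝ)| - c ≤ dist (f ^ m • o) (f ^ n • o) ∧
      dist (f ^ m • o) (f ^ n • o) ≤ c * |(m : ℝ) - (n : ℝ)| + c) ∧
  IsContractingSet C (cyclicOrbit o f)

/-- `f` is a contracting element. -/
def IsContractingEltAny (o : Y) (f : G) : Prop :=
  ∃ C : ℝ, 1 ≤ C ∧ IsContractingElt o C f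

/-- the elementary group `E(f)`: elements moving `⟨f⟩ • o` a finite Hausdorff distance. -/
def EGroup (o : Y) (f : G) : Set G :=
  {g : G | EMetric.hausdorffEdist (g • cyclicOrbit o f) (cyclicOrbit o f) ≠ ⊤}

/-- the axis `Ax(f) = E(f) • o`. -/
def axisOf (o : Y) (f : G) : Set Y :=
  (fun g : G => g • o) '' EGroup o f

/-- the family of all `G`-translated axes of `h` and `k`. -/
def axesPairFam (o : Y) (h k : G) : Set (Set Y) :=
  {S | ∃ g : G, S = g • axisOf o h ∨ S = g • axisOf o k}

/-- `h` and `k` are independent contracting elements: the family of their translated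
axes has bounded projection. -/
def IndepElts (o : Y) (h k : G) : Prop :=
  ∃ B : ℝ, 0 < B ∧ ∀ U ∈ axesPairFam o h k, ∀ V ∈ axesPairFam o h k,
    U ≠ V → EMetric.diam (projSetOf U V) ≤ ENNReal.ofReal B

/-- the family of all `G`-translated axes of the triple `f₁, f₂, f₃`. -/
def axesTripleFam (o : Y) (f₁ f₂ f₃ : G) : Set (Set Y) :=
  {S | ∃ g : G, S = g • axisOf o f₁ ∨ S = g • axisOf o f₂ ∨ S = g • axisOf o f₃}

/-- `F = {f₁,f₂,f₃}` is an admissible triple with constants `C`, `B₀`: three pairwise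
independent contracting elements whose translated axes are `C`-contracting with
`B₀`-bounded projection. -/
def IsAdmissibleTriple (o : Y) (C B₀ : ℝ) (f₁ f₂ f₃ : G) : Prop :=
  f₁ ≠ f₂ ∧ f₁ ≠ f₃ ∧ f₂ ≠ f₃ ∧
  IsContractingEltAny o f₁ ∧ IsContractingEltAny o f₂ ∧ IsContractingEltAny o f₃ ∧
  IndepElts o f₁ f₂ ∧ IndepElts o f₁ f₃ ∧ IndepElts o f₂ f₃ ∧
  (∀ S ∈ axesTripleFam o f₁ f₂ f₃, IsContractingSet C S) ∧
  (∀ U ∈ axesTripleFam o f₁ f₂ f₃, ∀ V ∈ axesTripleFam o f₁ f₂ f₃,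
    U ≠ V → EMetric.diam (projSetOf U V) ≤ ENNReal.ofReal B₀)

/-- the geodesic `γ` contains an `(r,f)`-barrier at `g • o`. -/
def HasBarrier (o : Y) (r : ℝ) (f g : G) (γ : Set Y) : Prop :=
  Metric.infDist (g • o) γ ≤ r ∧ Metric.infDist ((g * f) • o) γ ≤ r

/-- the partial cone `Ω_x^F(g • o, r)`. -/
def partialCone (o x : Y) (f₁ f₂ f₃ : G) (g : G) (r : ℝ) : Set Y :=
  {z | ∃ γ : Set Y, IsGeodesicIn Y γ x z ∧
      (HasBarrier o r f₁ g γ ∨ HasBarrier o r f₂ g γ ∨ HasBarrier o r f₃ g γ)}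

/-- the partial shadow `Π_x^F(g • o, r)`: accumulation points of the partial cone in
the horofunction boundary. -/
def partialShadow (o x : Y) (f₁ f₂ f₃ : G) (g : G) (r : ℝ) : Set C(Y, ℝ) :=
  {ξ | IsHoroPoint o ξ ∧ ∃ u : ℕ → Y, (∀ n, u n ∈ partialCone o x f₁ f₂ f₃ g r) ∧
      HoroConv o u ξ}

/-- `ξ` is an `(r,F)`-conical point. -/
def IsConicalPt (o : Y) (f₁ f₂ f₃ : G) (r : ℝ) (ξ : C(Y, ℝ)) : Prop :=
  ∃ g₀ : G, Set.Infinite {g : G | ξ ∈ partialShadow o (g₀ • o) f₁ f₂ f₃ g r}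

/-- the usual cone `Ω_x(y,r)`. -/
def usualCone (x y : Y) (r : ℝ) : Set Y :=
  {z | ∃ γ : Set Y, IsGeodesicIn Y γ x z ∧ ∃ p ∈ γ, dist p y ≤ r}

/-- the usual shadow `Π_x(y,r)`. -/
def usualShadow (o x y : Y) (r : ℝ) : Set C(Y, ℝ) :=
  {ξ | IsHoroPoint o ξ ∧ ∃ u : ℕ → Y, (∀ n, u n ∈ usualCone x y r) ∧ HoroConv o u ξ}

/-- the set `Λ_c(G)` of conical points of the action. -/
def conicalSet (G : Type*) {Y : Type*} [Group G] [MulAction G Y] [MetricSpace Y]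
    (o : Y) : Set C(Y, ℝ) :=
  {ξ | ∃ r : ℝ, 0 < r ∧ ∃ g₀ : G, ∃ u : ℕ → G,
      Filter.Tendsto (fun n => dist o (u n • o)) atTop atTop ∧
      ∀ n, ξ ∈ usualShadow o (g₀ • o) (u n • o) r}

/-- the attracting fixed-point set `[h⁺]`: the locus of the accumulation points of
`{hⁿ o : n > 0}` in the horofunction boundary. -/
def attrFix (o : Y) (h : G) : Set C(Y, ℝ) :=
  locus o (accPoints o (fun n : ℕ => h ^ (n + 1) • o))

/-- the repelling fixed-point set `[h⁻]`. -/
def repFix (o : Y) (h : G) : Set C(Y, ℝ) :=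
  locus o (accPoints o (fun n : ℕ => h ^ (-(n + 1) : ℤ) • o))

/-- the limit set `Λ G y` of the orbit `G • y` in the horofunction boundary. -/
def orbitLimitSet (G : Type*) {Y : Type*} [Group G] [MulAction G Y] [MetricSpace Y]
    (o y : Y) : Set C(Y, ℝ) :=
  {ξ | IsHoroPoint o ξ ∧ ∃ u : ℕ → G,
      Filter.Tendsto (fun n => busemannCM o (u n • y)) atTop (nhds ξ)}

/-- the action of an isometry `g` on horofunctions. -/
def horoAct [ContinuousConstSMul G Y] (o : Y) (g : G) (ξ : C(Y, ℝ)) : C(Y, ℝ) :=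
  ⟨fun y => ξ (g⁻¹ • y) - ξ (g⁻¹ • o),
    (ξ.continuous.comp (continuous_const_smul g⁻¹)).sub continuous_const⟩

/-- the number of orbit points of `Γ ⊆ G` in the closed ball of radius `R` around `o`. -/
def orbitCount (G : Type*) {Y : Type*} [Group G] [MulAction G Y] [MetricSpace Y]
    (o : Y) (Γ : Set G) (R : ℝ) : ℕ :=
  Nat.card {g : G // g ∈ Γ ∧ dist o (g • o) ≤ R}

/-- the critical exponent `ω_Γ` of a subset `Γ ⊆ G`. -/
def critExp (G : Type*) {Y : Type*} [Group G] [MulAction G Y] [MetricSpace Y]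
    (o : Y) (Γ : Set G) : ℝ :=
  Filter.limsup (fun R : ℝ => Real.log (orbitCount G o Γ R) / R) atTop

/-- an `ω`-dimensional `G`-equivariant conformal density on the horofunction boundary:
a family of finite measures supported on `∂_h Y`, normalized at `o`, `G`-equivariant,
with conformal derivative `dμ_x/dμ_y(ξ) = e^{-ω·B_ξ(x,y)}`. -/
def IsConformalDensity (G : Type*) {Y : Type*} [Group G] [MulAction G Y] [MetricSpace Y]
    [ContinuousConstSMul G Y] [MeasurableSpace C(Y, ℝ)]
    (o : Y) (ω : ℝ) (μ : Y → MeasureTheory.Measure C(Y, ℝ)) : Prop :=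
  (∀ x : Y, MeasureTheory.IsFiniteMeasure (μ x)) ∧
  (∀ x : Y, μ x {ξ : C(Y, ℝ) | ¬ IsHoroPoint o ξ} = 0) ∧
  μ o Set.univ = 1 ∧
  (∀ g : G, ∀ x : Y, MeasureTheory.Measure.map (horoAct o g) (μ x) = μ (g • x)) ∧
  (∀ x y : Y, μ x = (μ y).withDensity
      (fun ξ : C(Y, ℝ) => ENNReal.ofReal (Real.exp (-ω * (ξ x - ξ y)))))

end GroupAction

/-!
Take `y n → ξ` and `z m → η`. A point `w` of a geodesic `[o, z m]` at distance `S` from `o`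
has `b_{z m}(w) = -S`; since `ξ - η` is bounded, also `b_{y n}(w) ≤ -S + K + 2` for large `n`,
so the Gromov product `(y n · z m)_o` tends to infinity. The projections of `y n` and `z m`
eventually lie in the bounded sets `P` and `Q`, so the geodesic `[y n, z m]` then stays
`C`-far from `X`, and contraction puts `π_X(y n)` within `C` of `π_X(z m)`. Hence
`‖P ∪ Q‖ ≤ 2C + C + 2C`.
-/

namespace IsGeodesicIn

variable {Y : Type*} [MetricSpace Y] {γ : Set Y} {x y : Y}

lemma left_mem (hγ : IsGeodesicIn Y γ x y) : x ∈ γ := by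
  obtain ⟨f, hf0, -, -, rfl⟩ := hγ
  exact ⟨0, ⟨le_rfl, dist_nonneg⟩, hf0⟩

lemma right_mem (hγ : IsGeodesicIn Y γ x y) : y ∈ γ := by
  obtain ⟨f, -, hfd, -, rfl⟩ := hγ
  exact ⟨dist x y, ⟨dist_nonneg, le_rfl⟩, hfd⟩

lemma dist_add_dist_eq (hγ : IsGeodesicIn Y γ x y) {w : Y} (hw : w ∈ γ) :
    dist x w + dist w y = dist x y := by
  obtain ⟨f, hf0, hfd, hiso, rfl⟩ := hγ
  obtain ⟨t, ht, rfl⟩ := hw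
  have hx := hiso 0 ⟨le_rfl, dist_nonneg⟩ t ht
  have hy := hiso t ht (dist x y) ⟨dist_nonneg, le_rfl⟩
  rw [hf0] at hx
  rw [hfd] at hy
  rw [hx, hy, abs_of_nonpos (by linarith [ht.1]), abs_of_nonpos (by linarith [ht.2])]
  ring

end IsGeodesicIn

lemma GeodesicSpace.exists_dist_eq {Y : Type*} [MetricSpace Y] (hY : GeodesicSpace Y)
    {x y : Y} {R : ℝ} (hR : 0 ≤ R) (hRxy : R ≤ dist x y) :
    ∃ w, dist x w = R ∧ dist w y = dist x y - R := by
  obtain ⟨γ, f, hf0, hfd, hiso, rfl⟩ := hY x y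
  have hw : f R ∈ f '' Icc 0 (dist x y) := mem_image_of_mem f ⟨hR, hRxy⟩
  have hxw : dist x (f R) = R := by
    rw [← hf0, hiso 0 ⟨le_rfl, dist_nonneg⟩ R ⟨hR, hRxy⟩, zero_sub, abs_neg, abs_of_nonneg hR]
  refine ⟨f R, hxw, ?_⟩
  have := IsGeodesicIn.dist_add_dist_eq ⟨f, hf0, hfd, hiso, rfl⟩ hw
  linarith

section Contracting

variable {Y : Type*} [MetricSpace Y] {X : Set Y}

lemma projSet_nonempty [ProperSpace Y] (hX : IsClosed X) (hne : X.Nonempty) (y : Y) :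
    (projSet X y).Nonempty := by
  obtain ⟨x, hx, hd⟩ := hX.exists_infDist_eq_dist hne y
  exact ⟨x, hx, hd.symm⟩

lemma le_infDist_of_isGeodesicIn {C : ℝ} {γ : Set Y} {y z : Y} (hγ : IsGeodesicIn Y γ y z)
    (h : dist y z + 2 * C ≤ infDist y X + infDist z X) : ∀ w ∈ γ, C ≤ infDist w X := by
  intro w hw
  have hy : infDist y X ≤ infDist w X + dist y w := infDist_le_infDist_add_dist
  have hz : infDist z X ≤ infDist w X + dist z w := infDist_le_infDist_add_dist
  have := hγ.dist_add_dist_eq hw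
  rw [dist_comm z w] at hz
  linarith

lemma IsContractingSet.dist_projSet_le {C : ℝ} (hX : IsContractingSet C X)
    (hY : GeodesicSpace Y) (hC : 0 ≤ C) {y z : Y}
    (h : dist y z + 2 * C ≤ infDist y X + infDist z X)
    {p q : Y} (hp : p ∈ projSet X y) (hq : q ∈ projSet X z) : dist p q ≤ C := by
  obtain ⟨γ, hγ⟩ := hY y z
  have hdiam := hX y z γ hγ (le_infDist_of_isGeodesicIn hγ h)
  rw [← edist_le_ofReal hC]
  exact (edist_le_ediam_of_mem (mem_biUnion hγ.left_mem hp)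
    (mem_biUnion hγ.right_mem hq)).trans hdiam

end Contracting

section Horofunction

variable {Y : Type*} [MetricSpace Y] {o : Y}

@[simp]
lemma busemannCM_apply (o y x : Y) : busemannCM o y x = dist x y - dist o y := rfl

lemma continuous_busemannCM (o : Y) : Continuous (busemannCM o) :=
  ContinuousMap.continuous_of_continuous_uncurry _ <|
    (continuous_snd.dist continuous_fst).sub (continuous_const.dist continuous_fst)

lemma exists_horoConv [ProperSpace Y] {ξ : C(Y, ℝ)} (hξ : IsHoroPoint o ξ) :
    ∃ u : ℕ → Y, HoroConv o u ξ := by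
  obtain ⟨g, hg, hgξ⟩ := mem_closure_iff_seq_limit.mp hξ.1
  choose u hu using hg
  exact ⟨u, by simpa only [HoroConv, hu] using hgξ⟩

lemma FinDiff.mem_locus {Λ : Set C(Y, ℝ)} {ξ η : C(Y, ℝ)} (h : FinDiff η ξ)
    (hξ : IsHoroPoint o ξ) (hη : η ∈ locus o Λ) : ξ ∈ locus o Λ := by
  obtain ⟨-, ζ, hζ, hζη⟩ := hη
  exact ⟨hξ, ζ, hζ, (finDiffSetoid Y).iseqv.trans hζη h⟩

namespace HoroConv

variable {u : ℕ → Y} {ξ : C(Y, ℝ)}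

lemma eventually_abs_sub_lt [ProperSpace Y] (hu : HoroConv o u ξ) (R : ℝ) :
    ∀ᶠ n in atTop, ∀ x ∈ closedBall o R, |busemannCM o (u n) x - ξ x| < 1 := by
  have h := ContinuousMap.tendsto_iff_forall_isCompact_tendstoUniformlyOn.mp hu
    (closedBall o R) (isCompact_closedBall o R)
  filter_upwards [Metric.tendstoUniformlyOn_iff.mp h 1 one_pos] with n hn x hx
  rw [abs_sub_comm, ← Real.dist_eq]
  exact hn x hx

lemma tendsto_dist_atTop [ProperSpace Y] (hu : HoroConv o u ξ) (hξ : IsHoroPoint o ξ) :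
    Tendsto (fun n => dist o (u n)) atTop atTop := by
  refine tendsto_atTop.mpr fun b => ?_
  by_contra h
  obtain ⟨φ, hφ, hφb⟩ := extraction_of_frequently_atTop (not_eventually.mp h)
  have hball : ∀ n, u (φ n) ∈ closedBall o b := fun n =>
    mem_closedBall'.mpr (not_le.mp (hφb n)).le
  obtain ⟨x, -, ψ, hψ, hx⟩ := tendsto_subseq_of_bounded isBounded_closedBall hball
  have hlim : Tendsto (fun n => busemannCM o (u (φ (ψ n)))) atTop (𝓝 (busemannCM o x)) :=
    ((continuous_busemannCM o).tendsto x).comp hx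
  exact hξ.2 x (tendsto_nhds_unique (hu.comp (hφ.comp hψ).tendsto_atTop) hlim)

end HoroConv

lemma eventually_dist_add_le_of_finDiff [ProperSpace Y] (hY : GeodesicSpace Y)
    {ξ η : C(Y, ℝ)} (hη : IsHoroPoint o η) (hξη : FinDiff ξ η) {u v : ℕ → Y}
    (hu : HoroConv o u ξ) (hv : HoroConv o v η) (R : ℝ) :
    ∀ᶠ n in atTop, ∀ᶠ m in atTop, dist (u n) (v m) + R ≤ dist o (u n) + dist o (v m) := by
  obtain ⟨K, hK⟩ := hξη
  have hK0 : 0 ≤ K := (abs_nonneg _).trans (hK o)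
  set S := |R| + K + 2
  have hS : 0 ≤ S := by positivity
  filter_upwards [hu.eventually_abs_sub_lt S] with n hn
  filter_upwards [hv.eventually_abs_sub_lt S, (hv.tendsto_dist_atTop hη).eventually_ge_atTop S]
    with m hm hmS
  obtain ⟨w, how, hwv⟩ := hY.exists_dist_eq hS hmS
  have hwS : w ∈ closedBall o S := by rw [mem_closedBall, dist_comm, how]
  have hξw := abs_lt.mp (hn w hwS)
  have hηw := abs_lt.mp (hm w hwS)
  have hKw := abs_le.mp (hK w)
  simp only [busemannCM_apply] at hξw hηw
  have := dist_triangle (u n) w (v m)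
  rw [dist_comm (u n) w] at this
  linarith [le_abs_self R]

end Horofunction

lemma eventually_dist_projSet_le {Y : Type*} [MetricSpace Y] [ProperSpace Y]
    (hY : GeodesicSpace Y) {o : Y} {C : ℝ} (hC : 0 ≤ C) {X : Set Y}
    (hX : IsContractingSet C X) {ξ η : C(Y, ℝ)} (hη : IsHoroPoint o η) (hξη : FinDiff ξ η)
    {u v : ℕ → Y} (hu : HoroConv o u ξ) (hv : HoroConv o v η) {r : ℝ}
    (hur : ∀ᶠ n in atTop, projSet X (u n) ⊆ closedBall o r)
    (hvr : ∀ᶠ m in atTop, projSet X (v m) ⊆ closedBall o r) :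
    ∀ᶠ n in atTop, ∀ᶠ m in atTop,
      ∀ p ∈ projSet X (u n), ∀ q ∈ projSet X (v m), dist p q ≤ C := by
  filter_upwards [eventually_dist_add_le_of_finDiff hY hη hξη hu hv (2 * C + 2 * r), hur]
    with n hn hnr
  filter_upwards [hn, hvr] with m hm hmr p hp q hq
  refine hX.dist_projSet_le hY hC ?_ hp hq
  have hpr := mem_closedBall'.mp (hnr hp)
  have hqr := mem_closedBall'.mp (hmr hq)
  have := dist_triangle o p (u n)
  have := dist_triangle o q (v m)
  rw [← hp.2, ← hq.2, dist_comm (u n) p, dist_comm (v m) q]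
  linarith

theorem statement11_general {Y : Type*} [MetricSpace Y] [ProperSpace Y]
    (hY : GeodesicSpace Y) (o : Y) (C : ℝ) (hC : 1 ≤ C)
    (X : Set Y) (hXcl : IsClosed X)
    (hXcon : IsContractingSet C X)
    (ξ : C(Y, ℝ)) (hξ : IsHoroPoint o ξ) (hξn : ξ ∉ locus o (limitSetOf o X)) :
    ∀ η : C(Y, ℝ), IsHoroPoint o η → FinDiff ξ η →
      η ∉ locus o (limitSetOf o X) ∧
      ∀ P Q : Set Y,
        (P ⊆ X ∧ EMetric.diam P ≤ ENNReal.ofReal (2 * C) ∧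
          ∀ y : ℕ → Y, HoroConv o y ξ → ∀ᶠ n in atTop, projSet X (y n) ⊆ P) →
        (Q ⊆ X ∧ EMetric.diam Q ≤ ENNReal.ofReal (2 * C) ∧
          ∀ y : ℕ → Y, HoroConv o y η → ∀ᶠ n in atTop, projSet X (y n) ⊆ Q) →
        EMetric.diam (P ∪ Q) ≤ ENNReal.ofReal (6 * C) := by
  intro η hη hξη
  refine ⟨fun hηΛ => hξn (FinDiff.mem_locus ((finDiffSetoid Y).iseqv.symm hξη) hξ hηΛ), ?_⟩
  rintro P Q ⟨hPX, hPd, hP⟩ ⟨hQX, hQd, hQ⟩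
  have hC0 : 0 ≤ C := zero_le_one.trans hC
  rcases X.eq_empty_or_nonempty with rfl | hXne
  · rw [subset_empty_iff.mp hPX, subset_empty_iff.mp hQX, union_empty]
    exact ediam_empty.trans_le zero_le
  have hbdd : ∀ {S : Set Y}, ediam S ≤ ENNReal.ofReal (2 * C) → Bornology.IsBounded S :=
    fun hS => isBounded_iff_ediam_ne_top.mpr (hS.trans_lt ENNReal.ofReal_lt_top).ne
  obtain ⟨r, hr⟩ := ((hbdd hPd).union (hbdd hQd)).subset_closedBall o
  obtain ⟨y, hy⟩ := exists_horoConv hξ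
  obtain ⟨z, hz⟩ := exists_horoConv hη
  have hclose := eventually_dist_projSet_le hY hC0 hXcon hη hξη hy hz
    ((hP y hy).mono fun n h => h.trans (subset_union_left.trans hr))
    ((hQ z hz).mono fun m h => h.trans (subset_union_right.trans hr))
  obtain ⟨N, hPN, hN⟩ := ((hP y hy).and hclose).exists
  obtain ⟨M, hQM, hM⟩ := ((hQ z hz).and hN).exists
  obtain ⟨p, hp⟩ := projSet_nonempty hXcl hXne (y N)
  obtain ⟨q, hq⟩ := projSet_nonempty hXcl hXne (z M)
  calc ediam (P ∪ Q) ≤ ediam P + edist p q + ediam Q := ediam_union_le_add_edist (hPN hp) (hQM hq)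
    _ ≤ ENNReal.ofReal (2 * C) + ENNReal.ofReal C + ENNReal.ofReal (2 * C) :=
      add_le_add (add_le_add hPd ((edist_le_ofReal hC0).mpr (hM p hp q hq))) hQd
    _ = ENNReal.ofReal (5 * C) := by
      rw [← ENNReal.ofReal_add (by linarith) hC0, ← ENNReal.ofReal_add (by linarith) (by linarith)]
      ring_nf
    _ ≤ ENNReal.ofReal (6 * C) := ENNReal.ofReal_le_ofReal (by linarith)

/-- if `ξ ∈ ∂_h Y` lies outside the locus of `Λ X` for a `C`-contracting
quasi-geodesic `X`, then every `η` in the class `[ξ]` also lies outside `[Λ X]` and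
`d_X(ξ, η) ≤ 6C`, i.e. any two boundary projections of `ξ` and `η` to `X` together have
diameter at most `6C`. -/
theorem statement11 {Y : Type*} [MetricSpace Y] [ProperSpace Y]
    (hY : GeodesicSpace Y) (o : Y) (C : ℝ) (hC : 1 ≤ C)
    (X : Set Y) (hXcl : IsClosed X) (hXq : IsQuasiGeodesicSet X)
    (hXcon : IsContractingSet C X)
    (ξ : C(Y, ℝ)) (hξ : IsHoroPoint o ξ) (hξn : ξ ∉ locus o (limitSetOf o X)) :
    ∀ η : C(Y, ℝ), IsHoroPoint o η → FinDiff ξ η →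
      η ∉ locus o (limitSetOf o X) ∧
      ∀ P Q : Set Y,
        (P ⊆ X ∧ EMetric.diam P ≤ ENNReal.ofReal (2 * C) ∧
          ∀ y : ℕ → Y, HoroConv o y ξ → ∀ᶠ n in atTop, projSet X (y n) ⊆ P) →
        (Q ⊆ X ∧ EMetric.diam Q ≤ ENNReal.ofReal (2 * C) ∧
          ∀ y : ℕ → Y, HoroConv o y η → ∀ᶠ n in atTop, projSet X (y n) ⊆ Q) →
        EMetric.diam (P ∪ Q) ≤ ENNReal.ofReal (6 * C) :=
  statement11_general hY o C hC X hXcl hXcon ξ hξ hξn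

end ConfDyn
end
end

section
/- Suppose G contains a contracting element and let {μ_x}_{x∈Y} be an ω-dimensional G-equivariant conformal density on ∂_hY for some ω > 0. Then μ_o has no atoms at conical points: for every admissible triple F (with constants C, B₀) with min_{f∈F} d(o,fo) sufficiently large and every sufficiently large r, μ_o({ξ}) = 0 for each (r,F)-conical point ξ ∈ ∂_hY. -/
open Metric Filter Topology Set MeasureTheory Pointwise

noncomputable section

namespace ConfDyn

/-!
If `ξ` lies in the partial shadow of `g • o` seen from `x`, the geodesics from `x` to points
converging to `ξ` pass within `r` of `g • o`, whence `ξ (g • o) ≤ 2r + 2 d(o,x) - d(o, g • o)`.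
Conformality and equivariance give `μ_o{ξ} = e^{ω ξ(g • o)} μ_{g • o}{ξ} ≤ e^{ω ξ(g • o)}`.
A conical point lies in infinitely many such shadows, and properness of the action pushes the
corresponding `g • o` to infinity, so `μ_o{ξ} = 0`.
-/

theorem IsGeodesicIn.left_mem_s16 {Y : Type*} [MetricSpace Y] {γ : Set Y} {x z : Y}
    (hγ : IsGeodesicIn Y γ x z) : x ∈ γ := by
  obtain ⟨f, hf0, -, -, rfl⟩ := hγ
  exact ⟨0, ⟨le_rfl, dist_nonneg⟩, hf0⟩

theorem IsGeodesicIn.dist_add_dist_of_mem {Y : Type*} [MetricSpace Y] {γ : Set Y} {x z p : Y}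
    (hγ : IsGeodesicIn Y γ x z) (hp : p ∈ γ) : dist x p + dist p z = dist x z := by
  obtain ⟨f, hf0, hfz, hiso, rfl⟩ := hγ
  obtain ⟨t, ht, rfl⟩ := hp
  have hxp := hiso 0 ⟨le_rfl, dist_nonneg⟩ t ht
  have hpz := hiso t ht _ ⟨dist_nonneg, le_rfl⟩
  rw [hf0] at hxp
  rw [hfz] at hpz
  rw [hxp, hpz, zero_sub, abs_neg, abs_of_nonneg ht.1, abs_of_nonpos (by linarith [ht.2])]
  ring

theorem IsGeodesicIn.dist_sub_dist_le {Y : Type*} [MetricSpace Y] {γ : Set Y} {x z : Y}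
    (hγ : IsGeodesicIn Y γ x z) (o y : Y) :
    dist y z - dist o z ≤ 2 * Metric.infDist y γ + 2 * dist o x - dist o y := by
  suffices h : (dist y z - dist o z - 2 * dist o x + dist o y) / 2 ≤ Metric.infDist y γ by
    linarith
  refine (le_infDist ⟨x, hγ.left_mem_s16⟩).2 fun p hp => ?_
  have hxpz := hγ.dist_add_dist_of_mem hp
  linarith [dist_triangle y p z, dist_triangle x p y, dist_triangle o x y, dist_triangle x o z,
    dist_comm p y, dist_comm x o]

theorem horoCpt_apply_self {Y : Type*} [MetricSpace Y] {o : Y} {ξ : C(Y, ℝ)}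
    (hξ : ξ ∈ horoCpt Y o) : ξ o = 0 := by
  have hclosed : IsClosed {η : C(Y, ℝ) | η o = 0} :=
    isClosed_eq (continuous_eval_const o) continuous_const
  refine hclosed.closure_subset_iff.2 ?_ hξ
  rintro - ⟨y, rfl⟩
  simp [busemannCM]

theorem HoroConv.apply_le {Y : Type*} [MetricSpace Y] {o y : Y} {u : ℕ → Y} {ξ : C(Y, ℝ)}
    {c : ℝ} (hu : HoroConv o u ξ) (hc : ∀ n, dist y (u n) - dist o (u n) ≤ c) : ξ y ≤ c :=
  le_of_tendsto' (((continuous_eval_const y).tendsto ξ).comp hu) hc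

section GroupAction

variable {Y : Type*} [MetricSpace Y] {G : Type*} [Group G] [MulAction G Y]

theorem partialShadow_apply_le {o x : Y} {f₁ f₂ f₃ g : G} {r : ℝ} {ξ : C(Y, ℝ)}
    (hξ : ξ ∈ partialShadow o x f₁ f₂ f₃ g r) :
    ξ (g • o) ≤ 2 * r + 2 * dist o x - dist o (g • o) := by
  obtain ⟨-, u, hu, hconv⟩ := hξ
  refine hconv.apply_le fun n => ?_
  obtain ⟨γ, hγ, hbar⟩ := hu n
  have hnear : Metric.infDist (g • o) γ ≤ r := by
    rcases hbar with h | h | h <;> exact h.1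
  linarith [hγ.dist_sub_dist_le o (g • o)]

theorem ProperAction.finite_setOf_dist_le (hprop : ProperAction G Y) (o : Y) (R : ℝ) :
    {g : G | dist o (g • o) ≤ R}.Finite := by
  refine (hprop (Metric.closedBall o R) isBounded_closedBall).subset fun g hg => ?_
  have hR : 0 ≤ R := dist_nonneg.trans hg
  refine Set.nonempty_iff_ne_empty.1 ⟨g • o, Set.smul_mem_smul_set ?_, ?_⟩
  · exact Metric.mem_closedBall_self hR
  · rwa [Metric.mem_closedBall, dist_comm]

theorem ProperAction.exists_dist_gt_of_infinite (hprop : ProperAction G Y) (o : Y)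
    {S : Set G} (hS : S.Infinite) (R : ℝ) : ∃ g ∈ S, R < dist o (g • o) := by
  by_contra! h
  exact hS ((hprop.finite_setOf_dist_le o R).subset h)

theorem continuous_horoAct [ContinuousConstSMul G Y] (o : Y) (g : G) :
    Continuous (horoAct o g) := by
  have hcomp : Continuous fun η : C(Y, ℝ) => η.comp ⟨(g⁻¹ • ·), continuous_const_smul _⟩ :=
    ContinuousMap.continuous_precomp _
  have hconst : Continuous fun η : C(Y, ℝ) => ContinuousMap.const Y (η (g⁻¹ • o)) :=
    ContinuousMap.continuous_const'.comp (continuous_eval_const _)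
  exact (hcomp.sub hconst).congr fun η => by ext; rfl

namespace IsConformalDensity

variable [ContinuousConstSMul G Y] [MeasurableSpace C(Y, ℝ)] {o : Y} {ω : ℝ}
  {μ : Y → Measure C(Y, ℝ)}

theorem measure_smul_univ [BorelSpace C(Y, ℝ)] (hμ : IsConformalDensity G o ω μ) (g : G) :
    μ (g • o) univ = 1 := by
  rw [← hμ.2.2.2.1 g o, Measure.map_apply (continuous_horoAct o g).measurable .univ,
    preimage_univ, hμ.2.2.1]

theorem measure_singleton [MeasurableSingletonClass C(Y, ℝ)]
    (hμ : IsConformalDensity G o ω μ) (x y : Y) (ξ : C(Y, ℝ)) :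
    μ x {ξ} = ENNReal.ofReal (Real.exp (-ω * (ξ x - ξ y))) * μ y {ξ} := by
  rw [hμ.2.2.2.2 x y, withDensity_apply _ (measurableSet_singleton ξ), lintegral_singleton]

theorem measure_singleton_le [BorelSpace C(Y, ℝ)] (hμ : IsConformalDensity G o ω μ)
    {ξ : C(Y, ℝ)} (hξ : ξ o = 0) (g : G) :
    μ o {ξ} ≤ ENNReal.ofReal (Real.exp (ω * ξ (g • o))) :=
  calc μ o {ξ} = ENNReal.ofReal (Real.exp (ω * ξ (g • o))) * μ (g • o) {ξ} := by
        rw [hμ.measure_singleton o (g • o), hξ, zero_sub, mul_neg, neg_mul, neg_neg]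
    _ ≤ ENNReal.ofReal (Real.exp (ω * ξ (g • o))) * μ (g • o) univ := by
        gcongr
        exact subset_univ _
    _ = ENNReal.ofReal (Real.exp (ω * ξ (g • o))) := by
        rw [hμ.measure_smul_univ, mul_one]

theorem measure_singleton_eq_zero [BorelSpace C(Y, ℝ)] (hμ : IsConformalDensity G o ω μ)
    (hω : 0 < ω) {ξ : C(Y, ℝ)} (hξ : ξ o = 0) (hunbdd : ∀ c : ℝ, ∃ g : G, ξ (g • o) ≤ c) :
    μ o {ξ} = 0 := by
  have hlim : Tendsto (fun c : ℝ => ENNReal.ofReal (Real.exp (ω * c))) atBot (𝓝 0) := by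
    rw [← ENNReal.ofReal_zero]
    exact ENNReal.tendsto_ofReal
      (Real.tendsto_exp_atBot.comp (tendsto_id.const_mul_atBot hω))
  refine nonpos_iff_eq_zero.1 (ge_of_tendsto' hlim fun c => ?_)
  obtain ⟨g, hg⟩ := hunbdd c
  calc μ o {ξ} ≤ ENNReal.ofReal (Real.exp (ω * ξ (g • o))) := hμ.measure_singleton_le hξ g
    _ ≤ ENNReal.ofReal (Real.exp (ω * c)) := by gcongr

end IsConformalDensity

end GroupAction

theorem statement16_general {Y G : Type*} [MetricSpace Y]
    [Group G] [MulAction G Y] [ContinuousConstSMul G Y]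
    [MeasurableSpace C(Y, ℝ)] [BorelSpace C(Y, ℝ)]
    (hprop : ProperAction G Y) (o : Y)
    (C B₀ : ℝ)
    (ω : ℝ) (hω : 0 < ω) (μ : Y → MeasureTheory.Measure C(Y, ℝ))
    (hμ : IsConformalDensity G o ω μ) :
    ∃ L : ℝ, 0 < L ∧
      ∀ f₁ f₂ f₃ : G, IsAdmissibleTriple o C B₀ f₁ f₂ f₃ →
        L ≤ dist o (f₁ • o) → L ≤ dist o (f₂ • o) → L ≤ dist o (f₃ • o) →
        ∃ r₀ : ℝ, 0 < r₀ ∧ ∀ r : ℝ, r₀ ≤ r →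
          ∀ ξ : C(Y, ℝ), IsConicalPt o f₁ f₂ f₃ r ξ → μ o {ξ} = 0 := by
  refine ⟨1, one_pos, fun f₁ f₂ f₃ _ _ _ _ => ⟨1, one_pos, fun r _ ξ ⟨g₀, hS⟩ => ?_⟩⟩
  obtain ⟨g₁, hg₁⟩ := hS.nonempty
  refine hμ.measure_singleton_eq_zero hω (horoCpt_apply_self hg₁.1.1) fun c => ?_
  obtain ⟨g, hg, hfar⟩ := hprop.exists_dist_gt_of_infinite o hS (2 * r + 2 * dist o (g₀ • o) - c)
  exact ⟨g, by linarith [partialShadow_apply_le hg]⟩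

/-- a conformal density has no atoms at conical points. -/
theorem statement16 {Y G : Type*} [MetricSpace Y] [ProperSpace Y]
    [Group G] [MulAction G Y] [Countable G] [ContinuousConstSMul G Y]
    [MeasurableSpace C(Y, ℝ)] [BorelSpace C(Y, ℝ)]
    (hY : GeodesicSpace Y) (hiso : IsometricAction G Y)
    (hprop : ProperAction G Y) (hne : NonElementary G) (o : Y)
    (hcontr : ∃ f : G, IsContractingEltAny o f)
    (C B₀ : ℝ) (hC : 1 ≤ C) (hB : 0 < B₀)
    (ω : ℝ) (hω : 0 < ω) (μ : Y → MeasureTheory.Measure C(Y, ℝ))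
    (hμ : IsConformalDensity G o ω μ) :
    ∃ L : ℝ, 0 < L ∧
      ∀ f₁ f₂ f₃ : G, IsAdmissibleTriple o C B₀ f₁ f₂ f₃ →
        L ≤ dist o (f₁ • o) → L ≤ dist o (f₂ • o) → L ≤ dist o (f₃ • o) →
        ∃ r₀ : ℝ, 0 < r₀ ∧ ∀ r : ℝ, r₀ ≤ r →
          ∀ ξ : C(Y, ℝ), IsConicalPt o f₁ f₂ f₃ r ξ → μ o {ξ} = 0 :=
  statement16_general hprop o C B₀ ω hω μ hμ

end ConfDyn
end
end
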